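/- For a complex number a with a ≠ 0, let A(a) be the 3×3 matrix with rows (2, -1, -1), (a-1, 0, -a), (a+1, -a, 0) (the Cartan matrix of S(1,2,a), where index 1 is the even simple root and indices 2, 3 are the isotropic odd simple roots). Then the odd reflection of A(a) at index 2 equals the matrix N with rows (0, a-1, 2-a), (a-1, 0, -a), (-a², -a², 2a²); and multiplying rows 1 and 2 of N by -1 and row 3 by 1/a², followed by simultaneously permuting rows and columns by the bijection σ with σ(1) = 3, σ(2) = 1, σ(3) = 2 (i.e. the entry in position (u,v) of the result is d_{σ(u)}·N_{σ(u),σ(v)} with d₁ = d₂ = -1, d₃ = 1/a²), yields exactly the matrix A(a-1). -/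

import Mathlib

/-!
Column `1` of `S12 a` (the second simple root: `Fin 3` counts from `0`) is `(-1, 0, -a)`, so for
`a ≠ 0` both other vertices are adjacent to the reflecting one. Every entry of `r₂(S12 a)` off
row and column `1` is then given by the last clause of the odd reflection, and both identities
become direct computations.
-/

open scoped Classical in
/-- The odd reflection `r_k(A)` of a square complex matrix `A` at an index `k`
(with `A k k = 0`). -/
noncomputable def oddReflection {I : Type*} [DecidableEq I]
    (A : Matrix I I ℂ) (k : I) : Matrix I I ℂ :=
  Matrix.of fun i j =>
    if i = k then A k j
    else if j = k then -(A k i * A i k)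
    else if A i k = 0 ∧ A k i = 0 then A i j
    else if A j k = 0 ∧ A k j = 0 then A k i * A i j
    else A k i * A i j + A k j * A i k + A k i * A i k

/-- The Cartan matrix of `S(1,2,a)`: the first simple root is even, the second and
third are isotropic odd. -/
def S12 (a : ℂ) : Matrix (Fin 3) (Fin 3) ℂ :=
  !![2, -1, -1; a - 1, 0, -a; a + 1, -a, 0]

theorem oddReflection_apply_of_forall_ne_zero {I : Type*} [DecidableEq I]
    (A : Matrix I I ℂ) (k : I) (hA : ∀ i, i ≠ k → A i k ≠ 0) (i j : I) :
    oddReflection A k i j =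
      if i = k then A k j
      else if j = k then -(A k i * A i k)
      else A k i * A i j + A k j * A i k + A k i * A i k := by
  unfold oddReflection
  split_ifs <;> simp_all

theorem oddReflection_S12_one {a : ℂ} (ha : a ≠ 0) :
    oddReflection (S12 a) 1 =
      !![0, a - 1, 2 - a; a - 1, 0, -a; -a ^ 2, -a ^ 2, 2 * a ^ 2] := by
  have hcol : ∀ i, i ≠ 1 → S12 a i 1 ≠ 0 := by
    intro i hi
    fin_cases i <;> simp_all [S12]
  ext i j
  rw [oddReflection_apply_of_forall_ne_zero _ _ hcol]
  fin_cases i <;> fin_cases j <;> simp [S12] <;> ring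

/-- Half of **Lemma 7.6**: the family `S(1,2,a)` is closed under the regular odd
reflection at the second simple root, which replaces `a` by `a - 1`.  Explicitly,
`r₂(S(1,2,a))` is the displayed matrix `N`, and rescaling the rows of `N` by
`(-1, -1, 1/a²)` and simultaneously permuting rows and columns by `σ = (1 ↦ 3, 2 ↦ 1,
3 ↦ 2)` yields `S(1,2,a-1)`. -/
theorem oddReflection_S12_at_second (a : ℂ) (ha : a ≠ 0) :
    oddReflection (S12 a) 1 =
      !![0, a - 1, 2 - a; a - 1, 0, -a; -a ^ 2, -a ^ 2, 2 * a ^ 2] ∧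
    (Matrix.of fun u v : Fin 3 =>
        (![(-1 : ℂ), -1, 1 / a ^ 2] (![2, 0, 1] u)) *
          oddReflection (S12 a) 1 (![2, 0, 1] u) (![2, 0, 1] v))
      = S12 (a - 1) := by
  refine ⟨oddReflection_S12_one ha, ?_⟩
  rw [oddReflection_S12_one ha]
  ext u v
  fin_cases u <;> fin_cases v <;> simp [S12] <;> grind
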